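/- Let ρ_0,…,ρ_{M-1} be a quantum state set whose Gram operator G = Σ_m ρ_m is positive definite, let X be a positive semidefinite operator with X ≥ ρ_m for all m, let 0 ≤ p ≤ 1, and set s(a) = Tr X + Tr((aG − X)_+) − a·p for a ≥ 0. If a ≤ λ_min(G^{-1/2} X G^{-1/2}) then s(a) = Tr X − a·p; moreover λ_min(G^{-1/2} X G^{-1/2}) ≥ 1/M. -/

import Mathlib

/-
Write `S = G^{1/2}`. Conjugating by the invertible Hermitian matrix `S⁻¹` turns `X - c • G` into
`S⁻¹ X S⁻¹ - c`, so `c ≤ λ_min(S⁻¹ X S⁻¹)` holds exactly when `X ≥ c • G`. For `c = a` this makes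
`a • G - X` negative semidefinite, so its positive part vanishes; for `c = 1/M`, `X ≥ G / M` is the
average of the inequalities `X ≥ ρ_m`.
-/

open Matrix
open scoped ComplexOrder

/-- Positive part `A₊` of a Hermitian matrix (junk value `0` on non-Hermitian input). -/
noncomputable def matPosPart {n : ℕ} (A : Matrix (Fin n) (Fin n) ℂ) : Matrix (Fin n) (Fin n) ℂ :=
  if hA : A.IsHermitian then
    (hA.eigenvectorUnitary : Matrix (Fin n) (Fin n) ℂ) *
      Matrix.diagonal (fun i => if 0 < hA.eigenvalues i then (hA.eigenvalues i : ℂ) else 0) *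
      star (hA.eigenvectorUnitary : Matrix (Fin n) (Fin n) ℂ)
  else 0

/-- Projection `P₍>₎(A)` onto the span of eigenvectors of positive eigenvalues. -/
noncomputable def matProjPos {n : ℕ} (A : Matrix (Fin n) (Fin n) ℂ) : Matrix (Fin n) (Fin n) ℂ :=
  if hA : A.IsHermitian then
    (hA.eigenvectorUnitary : Matrix (Fin n) (Fin n) ℂ) *
      Matrix.diagonal (fun i => if 0 < hA.eigenvalues i then (1 : ℂ) else 0) *
      star (hA.eigenvectorUnitary : Matrix (Fin n) (Fin n) ℂ)
  else 0

/-- Projection `P₍≥₎(A)` onto the span of eigenvectors of nonnegative eigenvalues. -/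
noncomputable def matProjNonneg {n : ℕ} (A : Matrix (Fin n) (Fin n) ℂ) : Matrix (Fin n) (Fin n) ℂ :=
  if hA : A.IsHermitian then
    (hA.eigenvectorUnitary : Matrix (Fin n) (Fin n) ℂ) *
      Matrix.diagonal (fun i => if 0 ≤ hA.eigenvalues i then (1 : ℂ) else 0) *
      star (hA.eigenvectorUnitary : Matrix (Fin n) (Fin n) ℂ)
  else 0

open scoped Classical in
/-- Positive semidefinite square root (junk value `0` on non-PSD input). -/
noncomputable def matSqrt {n : ℕ} (A : Matrix (Fin n) (Fin n) ℂ) : Matrix (Fin n) (Fin n) ℂ :=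
  if hA : A.PosSemidef then
    (hA.1.eigenvectorUnitary : Matrix (Fin n) (Fin n) ℂ) *
      Matrix.diagonal ((↑) ∘ (Real.sqrt ·) ∘ hA.1.eigenvalues : Fin n → ℂ) *
      star (hA.1.eigenvectorUnitary : Matrix (Fin n) (Fin n) ℂ)
  else 0

open scoped Classical in
/-- Minimum eigenvalue of a Hermitian matrix (junk value `0` on non-Hermitian input). -/
noncomputable def matLambdaMin {n : ℕ} (A : Matrix (Fin n) (Fin n) ℂ) : ℝ :=
  if hA : A.IsHermitian then ⨅ i, hA.eigenvalues i else 0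

open scoped Classical in
/-- Maximum eigenvalue of a Hermitian matrix (junk value `0` on non-Hermitian input). -/
noncomputable def matLambdaMax {n : ℕ} (A : Matrix (Fin n) (Fin n) ℂ) : ℝ :=
  if hA : A.IsHermitian then ⨆ i, hA.eigenvalues i else 0

namespace Matrix

variable {n 𝕜 : Type*} [RCLike 𝕜]

lemma posSemidef_sub_inv_card_smul_sum {ι : Type*} {s : Finset ι} (hs : s.Nonempty)
    {X : Matrix n n 𝕜} {ρ : ι → Matrix n n 𝕜} (hXρ : ∀ i ∈ s, (X - ρ i).PosSemidef) :
    (X - ((1 / s.card : ℝ) : 𝕜) • ∑ i ∈ s, ρ i).PosSemidef := by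
  have hmean : X - ((1 / s.card : ℝ) : 𝕜) • ∑ i ∈ s, ρ i =
      ((1 / s.card : ℝ) : 𝕜) • ∑ i ∈ s, (X - ρ i) := by
    have hcard : ((1 / s.card : ℝ) : 𝕜) * s.card = 1 := by
      rw [RCLike.ofReal_div, RCLike.ofReal_one, RCLike.ofReal_natCast]
      exact one_div_mul_cancel (Nat.cast_ne_zero.2 hs.card_pos.ne')
    rw [Finset.sum_sub_distrib, Finset.sum_const, smul_sub, ← Nat.cast_smul_eq_nsmul 𝕜, smul_smul,
      hcard, one_smul]
  rw [hmean]
  exact (posSemidef_sum s hXρ).smul (RCLike.ofReal_nonneg.2 (by positivity))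

variable [Fintype n] [DecidableEq n]

lemma IsHermitian.posSemidef_sub_smul_one_iff {A : Matrix n n 𝕜} (hA : A.IsHermitian) (c : ℝ) :
    (A - (c : 𝕜) • 1).PosSemidef ↔ ∀ i, c ≤ hA.eigenvalues i := by
  have hc : (c : 𝕜) • (1 : Matrix n n 𝕜) =
      Unitary.conjStarAlgAut 𝕜 _ hA.eigenvectorUnitary ((c : 𝕜) • 1) := by
    rw [map_smul, map_one]
  conv_lhs => rw [hA.spectral_theorem, hc, ← map_sub, Unitary.conjStarAlgAut_apply,
    Unitary.isUnit_coe.posSemidef_star_right_conjugate_iff, smul_one_eq_diagonal, diagonal_sub,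
    posSemidef_diagonal_iff]
  simp [sub_nonneg]

lemma IsHermitian.eigenvalues_nonpos {A : Matrix n n 𝕜} (hA : A.IsHermitian)
    (h : (-A).PosSemidef) (i : n) : hA.eigenvalues i ≤ 0 := by
  have := h.re_dotProduct_nonneg (hA.eigenvectorBasis i)
  rw [neg_mulVec, dotProduct_neg, map_neg, neg_nonneg] at this
  rwa [hA.eigenvalues_eq i]

lemma posSemidef_inv_mul_mul_inv_sub_smul_one_iff {S X : Matrix n n 𝕜} (hS : S.IsHermitian)
    (hSu : IsUnit S) (c : 𝕜) :
    (S⁻¹ * X * S⁻¹ - c • 1).PosSemidef ↔ (X - c • (S * S)).PosSemidef := by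
  have hconj : S⁻¹ * X * S⁻¹ - c • 1 = S⁻¹ * (X - c • (S * S)) * star S⁻¹ := by
    have hdet := (isUnit_iff_isUnit_det S).1 hSu
    rw [star_eq_conjTranspose, conjTranspose_nonsing_inv, hS.eq, mul_sub, sub_mul,
      mul_smul_comm, smul_mul_assoc, ← mul_assoc, nonsing_inv_mul _ hdet, one_mul,
      mul_nonsing_inv _ hdet]
  rw [hconj, (isUnit_nonsing_inv_iff.2 hSu).posSemidef_star_right_conjugate_iff]

end Matrix

lemma le_matLambdaMin_iff {n : ℕ} [NeZero n] {A : Matrix (Fin n) (Fin n) ℂ} (hA : A.IsHermitian)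
    (c : ℝ) : c ≤ matLambdaMin A ↔ (A - (c : ℂ) • 1).PosSemidef := by
  rw [matLambdaMin, dif_pos hA, le_ciInf_iff (Set.finite_range _).bddBelow]
  exact (hA.posSemidef_sub_smul_one_iff c).symm

lemma matPosPart_eq_zero_of_posSemidef_neg {n : ℕ} {A : Matrix (Fin n) (Fin n) ℂ} (h : (-A).PosSemidef) :
    matPosPart A = 0 := by
  have hA : A.IsHermitian := by simpa using h.isHermitian.neg
  have hdiag : (fun i => if 0 < hA.eigenvalues i then (hA.eigenvalues i : ℂ) else 0) = fun _ => 0 :=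
    funext fun i => if_neg (hA.eigenvalues_nonpos h i).not_gt
  rw [matPosPart, dif_pos hA, hdiag, diagonal_zero, mul_zero, zero_mul]

lemma matSqrt_eq_cfc {n : ℕ} {A : Matrix (Fin n) (Fin n) ℂ} (hA : A.PosSemidef) :
    matSqrt A = cfc Real.sqrt A := by
  rw [matSqrt, dif_pos hA, hA.isHermitian.cfc_eq, IsHermitian.cfc, Unitary.conjStarAlgAut_apply]
  rfl

lemma isHermitian_matSqrt {n : ℕ} (A : Matrix (Fin n) (Fin n) ℂ) : (matSqrt A).IsHermitian := by
  by_cases hA : A.PosSemidef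
  · rw [matSqrt_eq_cfc hA]
    exact cfc_predicate _ _
  · rw [matSqrt, dif_neg hA]
    exact isHermitian_zero

lemma matSqrt_mul_self {n : ℕ} {A : Matrix (Fin n) (Fin n) ℂ} (hA : A.PosSemidef) :
    matSqrt A * matSqrt A = A := by
  have hspec : ∀ x ∈ spectrum ℝ A, 0 ≤ x := by
    rw [hA.isHermitian.spectrum_real_eq_range_eigenvalues]
    rintro - ⟨i, rfl⟩
    exact hA.eigenvalues_nonneg i
  rw [matSqrt_eq_cfc hA, ← cfc_mul Real.sqrt Real.sqrt A]
  exact (cfc_congr fun x hx => Real.mul_self_sqrt (hspec x hx)).trans (cfc_id' ℝ A hA.isHermitian)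

theorem stmt_10_general {n M : ℕ} (hM : 0 < M) (ρ : ℕ → Matrix (Fin n) (Fin n) ℂ)
    (hρpos : ∀ m < M, 0 < (ρ m).trace.re)
    (G : Matrix (Fin n) (Fin n) ℂ) (hG : G = ∑ m ∈ Finset.range M, ρ m)
    (hGpd : G.PosDef)
    (X : Matrix (Fin n) (Fin n) ℂ) (hX : X.PosSemidef)
    (hXρ : ∀ m < M, (X - ρ m).PosSemidef)
    (p : ℝ)
    (a : ℝ)
    (halam : a ≤ matLambdaMin ((matSqrt G)⁻¹ * X * (matSqrt G)⁻¹)) :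
    X.trace.re + (matPosPart ((a : ℂ) • G - X)).trace.re - a * p = X.trace.re - a * p ∧
    1 / (M : ℝ) ≤ matLambdaMin ((matSqrt G)⁻¹ * X * (matSqrt G)⁻¹) := by
  have : NeZero n := ⟨by rintro rfl; simpa using hρpos 0 hM⟩
  set S := matSqrt G
  have hSS : S * S = G := matSqrt_mul_self hGpd.posSemidef
  have hSu : IsUnit S := isUnit_of_mul_isUnit_left (hSS ▸ hGpd.isUnit)
  have hY : (S⁻¹ * X * S⁻¹).IsHermitian := by
    have := isHermitian_mul_mul_conjTranspose S⁻¹ hX.isHermitian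
    rwa [(isHermitian_matSqrt G).inv.eq] at this
  have hlam (c : ℝ) : c ≤ matLambdaMin (S⁻¹ * X * S⁻¹) ↔ (X - (c : ℂ) • G).PosSemidef := by
    rw [le_matLambdaMin_iff hY, posSemidef_inv_mul_mul_inv_sub_smul_one_iff (isHermitian_matSqrt G)
      hSu, hSS]
  constructor
  · rw [matPosPart_eq_zero_of_posSemidef_neg (by rw [neg_sub]; exact (hlam a).1 halam), trace_zero, Complex.zero_re,
      add_zero]
  · have hmean := posSemidef_sub_inv_card_smul_sum (Finset.nonempty_range_iff.2 hM.ne')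
      fun m hm => hXρ m (Finset.mem_range.1 hm)
    rw [Finset.card_range, ← hG] at hmean
    exact (hlam _).2 hmean

/-- If `a ≤ λ_min(G^{-1/2} X G^{-1/2})` then
`s(a) = Tr X − a·p`; moreover `λ_min(G^{-1/2} X G^{-1/2}) ≥ 1/M`. -/
theorem stmt_10 {n M : ℕ} (hM : 0 < M) (ρ : ℕ → Matrix (Fin n) (Fin n) ℂ)
    (hρ : ∀ m < M, (ρ m).PosSemidef)
    (hρpos : ∀ m < M, 0 < (ρ m).trace.re)
    (hρsum : ∑ m ∈ Finset.range M, (ρ m).trace.re = 1)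
    (G : Matrix (Fin n) (Fin n) ℂ) (hG : G = ∑ m ∈ Finset.range M, ρ m)
    (hGpd : G.PosDef)
    (X : Matrix (Fin n) (Fin n) ℂ) (hX : X.PosSemidef)
    (hXρ : ∀ m < M, (X - ρ m).PosSemidef)
    (p : ℝ) (hp0 : 0 ≤ p) (hp1 : p ≤ 1)
    (a : ℝ) (ha : 0 ≤ a)
    (halam : a ≤ matLambdaMin ((matSqrt G)⁻¹ * X * (matSqrt G)⁻¹)) :
    X.trace.re + (matPosPart ((a : ℂ) • G - X)).trace.re - a * p = X.trace.re - a * p ∧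
    1 / (M : ℝ) ≤ matLambdaMin ((matSqrt G)⁻¹ * X * (matSqrt G)⁻¹) :=
  stmt_10_general hM ρ hρpos G hG hGpd X hX hXρ p a halam
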